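/- arXiv:2007.12097 — 2 statements merged into one kernel-verified Lean document; each statement's English description precedes it below -/
import Mathlib

section
/- If A, B ⊆ {1,...,n} are distinct and for every prime p ≤ k and every residue i ∈ {0,...,p-1} we have |A_{i,p}| = |B_{i,p}|, then n ≥ Σ_{p ≤ k, p prime} (p−1). -/
/-!
Encode `A` and `B` by `f = ∑_{a ∈ A} X^a - ∑_{b ∈ B} X^b ∈ ℚ[X]`, a nonzero polynomial
of degree at most `n`. Modulo `X^p - 1` every `X^a` reduces to `X^(a % p)`, so the
equidistribution of `A` and `B` modulo `p` makes `X^p - 1`, hence `Φ_p`, divide `f` for every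
prime `p ≤ k`. The cyclotomic polynomials are pairwise coprime, so their product, of degree
`∑ (p - 1)`, divides `f`.
-/

open Polynomial Finset

theorem pow_sub_one_dvd_pow_sub_pow_mod {R : Type*} [CommRing R] (x : R) (p a : ℕ) :
    x ^ p - 1 ∣ x ^ a - x ^ (a % p) := by
  have h : x ^ a - x ^ (a % p) = x ^ (a % p) * (x ^ (p * (a / p)) - 1) := by
    rw [mul_sub, mul_one, ← pow_add, Nat.mod_add_div]
  rw [h]
  exact (pow_one_sub_dvd_pow_mul_sub_one x p (a / p)).mul_left _

theorem sum_comp_mod_eq_sum_card_filter_smul {M : Type*} [AddCommMonoid M] {p : ℕ} (hp : 0 < p)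
    (S : Finset ℕ) (f : ℕ → M) :
    ∑ a ∈ S, f (a % p) = ∑ i ∈ range p, #{a ∈ S | a % p = i} • f i := by
  rw [← sum_fiberwise_of_maps_to (g := (· % p)) (t := range p)
    fun a _ => mem_range.mpr (Nat.mod_lt a hp)]
  refine sum_congr rfl fun i _ => ?_
  rw [sum_congr rfl fun a ha => by rw [(mem_filter.mp ha).2], sum_const]

theorem sum_comp_mod_eq_of_card_filter_mod_eq {M : Type*} [AddCommMonoid M] {p : ℕ}
    (hp : 0 < p) {A B : Finset ℕ} (h : ∀ i < p, #{a ∈ A | a % p = i} = #{b ∈ B | b % p = i})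
    (f : ℕ → M) :
    ∑ a ∈ A, f (a % p) = ∑ b ∈ B, f (b % p) := by
  rw [sum_comp_mod_eq_sum_card_filter_smul hp, sum_comp_mod_eq_sum_card_filter_smul hp]
  exact sum_congr rfl fun i hi => by rw [h i (mem_range.mp hi)]

theorem X_pow_sub_one_dvd_sum_X_pow_sub_sum_X_pow {R : Type*} [CommRing R] {p : ℕ} (hp : 0 < p)
    {A B : Finset ℕ} (h : ∀ i < p, #{a ∈ A | a % p = i} = #{b ∈ B | b % p = i}) :
    (X ^ p - 1 : R[X]) ∣ ∑ a ∈ A, X ^ a - ∑ b ∈ B, X ^ b := by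
  have hdvd := dvd_sub
    (dvd_sum (s := A) fun a _ => pow_sub_one_dvd_pow_sub_pow_mod (X : R[X]) p a)
    (dvd_sum (s := B) fun b _ => pow_sub_one_dvd_pow_sub_pow_mod (X : R[X]) p b)
  rwa [sum_sub_distrib, sum_sub_distrib,
    sum_comp_mod_eq_of_card_filter_mod_eq hp h (X ^ ·), sub_sub_sub_cancel_right] at hdvd

theorem coeff_sum_X_pow {R : Type*} [Semiring R] (S : Finset ℕ) (j : ℕ) :
    (∑ a ∈ S, X ^ a : R[X]).coeff j = if j ∈ S then 1 else 0 := by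
  simp [coeff_X_pow]

theorem sum_X_pow_injective (R : Type*) [Semiring R] [Nontrivial R] :
    Function.Injective fun S : Finset ℕ => (∑ a ∈ S, X ^ a : R[X]) := by
  intro A B hAB
  ext j
  have hj := congrArg (coeff · j) hAB
  simp only [coeff_sum_X_pow] at hj
  split_ifs at hj <;> simp_all

theorem natDegree_sum_X_pow_le {R : Type*} [Semiring R] {S : Finset ℕ} {n : ℕ}
    (hS : ∀ a ∈ S, a ≤ n) : (∑ a ∈ S, X ^ a : R[X]).natDegree ≤ n :=
  natDegree_sum_le_of_forall_le _ _ fun a ha => (natDegree_X_pow_le a).trans (hS a ha)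

theorem sum_totient_le_natDegree_of_cyclotomic_dvd {f : ℚ[X]} (hf : f ≠ 0) (P : Finset ℕ)
    (hP : ∀ m ∈ P, cyclotomic m ℚ ∣ f) : ∑ m ∈ P, m.totient ≤ f.natDegree := by
  have hprod : ∏ m ∈ P, cyclotomic m ℚ ∣ f :=
    prod_dvd_of_coprime (fun _ _ _ _ hne => cyclotomic.isCoprime_rat hne) hP
  calc ∑ m ∈ P, m.totient = (∏ m ∈ P, cyclotomic m ℚ).natDegree := by
        rw [natDegree_prod _ _ fun m _ => cyclotomic_ne_zero m ℚ]
        simp only [natDegree_cyclotomic]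
    _ ≤ f.natDegree := natDegree_le_of_dvd hprod hf

theorem stmt2 (n k : ℕ) (A B : Finset ℕ) (hA : A ⊆ Finset.Icc 1 n) (hB : B ⊆ Finset.Icc 1 n)
    (hAB : A ≠ B)
    (h : ∀ p : ℕ, Nat.Prime p → p ≤ k →
      ∀ i < p, (A.filter (fun a => a % p = i)).card = (B.filter (fun a => a % p = i)).card) :
    ∑ p ∈ (Finset.range (k+1)).filter Nat.Prime, (p - 1) ≤ n := by
  set f : ℚ[X] := ∑ a ∈ A, X ^ a - ∑ b ∈ B, X ^ b
  have hf : f ≠ 0 := sub_ne_zero.mpr fun hAB' => hAB (sum_X_pow_injective ℚ hAB')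
  have hdeg : f.natDegree ≤ n := by
    have hle : ∀ S ⊆ Icc 1 n, ∀ a ∈ S, a ≤ n := fun S hS a ha => (mem_Icc.mp (hS ha)).2
    exact (natDegree_sub_le _ _).trans
      (max_le (natDegree_sum_X_pow_le (hle A hA)) (natDegree_sum_X_pow_le (hle B hB)))
  have hcyc : ∀ p ∈ (range (k + 1)).filter Nat.Prime, cyclotomic p ℚ ∣ f := by
    intro p hpP
    obtain ⟨hpk, hprime⟩ := mem_filter.mp hpP
    exact (cyclotomic.dvd_X_pow_sub_one p ℚ).trans <| X_pow_sub_one_dvd_sum_X_pow_sub_sum_X_pow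
      hprime.pos (h p hprime (Nat.lt_succ_iff.mp (mem_range.mp hpk)))
  calc ∑ p ∈ (range (k + 1)).filter Nat.Prime, (p - 1)
      = ∑ p ∈ (range (k + 1)).filter Nat.Prime, p.totient :=
        sum_congr rfl fun p hp => (Nat.totient_prime (mem_filter.mp hp).2).symm
    _ ≤ f.natDegree := sum_totient_le_natDegree_of_cyclotomic_dvd hf _ hcyc
    _ ≤ n := hdeg
end

section
/- Let Σ be the collection of subsets A ⊆ {1,...,n} containing at most one element from each interval [2k·n^{1/3}, (2k+1)·n^{1/3}] for k = 0, 1, 2, ... and no elements outside these intervals. Then |Σ| ≥ (n^{1/3})^{⌊n^{2/3}/3⌋} for sufficiently large n, and every A ∈ Σ is n^{1/3}-separated. -/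
/-- `A` has at most one element from each interval `[2k·n^{1/3}, (2k+1)·n^{1/3}]`
and no elements outside these intervals. -/
def GoodSet (n : ℕ) (A : Finset ℕ) : Prop :=
  (∀ a ∈ A, ∃ k : ℕ, 2 * (k : ℝ) * (n : ℝ) ^ ((1 : ℝ) / 3) ≤ (a : ℝ) ∧
      (a : ℝ) ≤ (2 * (k : ℝ) + 1) * (n : ℝ) ^ ((1 : ℝ) / 3)) ∧
  ∀ a ∈ A, ∀ a' ∈ A, ∀ k : ℕ,
    (2 * (k : ℝ) * (n : ℝ) ^ ((1 : ℝ) / 3) ≤ (a : ℝ) ∧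
      (a : ℝ) ≤ (2 * (k : ℝ) + 1) * (n : ℝ) ^ ((1 : ℝ) / 3) ∧
      2 * (k : ℝ) * (n : ℝ) ^ ((1 : ℝ) / 3) ≤ (a' : ℝ) ∧
      (a' : ℝ) ≤ (2 * (k : ℝ) + 1) * (n : ℝ) ^ ((1 : ℝ) / 3)) → a = a'

open scoped Classical in
noncomputable def SigmaColl (n : ℕ) : Finset (Finset ℕ) :=
  (Finset.Icc 1 n).powerset.filter (GoodSet n)

/-! The blocks `[2km, (2k+1)m]`, `m = n^{1/3}`, are separated by gaps of length `m`, which gives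
the separation. For the count, the `⌈3K/2⌉` blocks with `(2k+1)m ≤ 3Km ≤ n` (where
`K = ⌊m²/3⌋`) each contain `t = ⌊m⌋ - 1` positive integers, and choosing one of them per block
gives `t ^ ⌈3K/2⌉` distinct members of `Σ`; this beats `m ^ K` because `m² ≤ t³` once `m ≥ 5`. -/

open Finset

def InBlock (m : ℝ) (k : ℕ) (x : ℝ) : Prop :=
  2 * (k : ℝ) * m ≤ x ∧ x ≤ (2 * (k : ℝ) + 1) * m

theorem goodSet_iff {n : ℕ} {A : Finset ℕ} :
    GoodSet n A ↔ (∀ a ∈ A, ∃ k, InBlock ((n : ℝ) ^ ((1 : ℝ) / 3)) k a) ∧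
      ∀ a ∈ A, ∀ a' ∈ A, ∀ k, InBlock ((n : ℝ) ^ ((1 : ℝ) / 3)) k a →
        InBlock ((n : ℝ) ^ ((1 : ℝ) / 3)) k a' → a = a' := by
  simp only [GoodSet, InBlock, and_imp]

namespace InBlock

variable {m x y : ℝ} {j k : ℕ}

theorem le_abs_sub (hm : 0 ≤ m) (hx : InBlock m j x) (hy : InBlock m k y) (hjk : j ≠ k) :
    m ≤ |x - y| := by
  wlog hlt : j < k generalizing j k x y
  · rw [abs_sub_comm]
    exact this hy hx hjk.symm (lt_of_le_of_ne (not_lt.mp hlt) hjk.symm)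
  have hgap : (2 * (j : ℝ) + 2) * m ≤ 2 * (k : ℝ) * m := by
    gcongr
    have : (j : ℝ) + 1 ≤ k := by exact_mod_cast hlt
    linarith
  rw [abs_sub_comm]
  exact le_abs.mpr (Or.inl (by linarith [hx.2, hy.1]))

theorem index_eq (hm : 0 < m) (hj : InBlock m j x) (hk : InBlock m k x) : j = k := by
  by_contra hjk
  have := le_abs_sub hm.le hj hk hjk
  rw [sub_self, abs_zero] at this
  linarith

end InBlock

-- The `+ 1` keeps the points of block `0` inside `[1, n]`.
noncomputable def blockPoint (m : ℝ) (k i : ℕ) : ℕ := ⌈2 * (k : ℝ) * m⌉₊ + 1 + i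

theorem inBlock_blockPoint {m : ℝ} {t : ℕ} (hm : 0 ≤ m) (ht : (t : ℝ) + 1 ≤ m) (k : ℕ) {i : ℕ}
    (hi : i < t) : InBlock m k (blockPoint m k i) := by
  have hceil := Nat.ceil_lt_add_one (by positivity : 0 ≤ 2 * (k : ℝ) * m)
  have hit : (i : ℝ) + 1 ≤ t := by exact_mod_cast hi
  have hpoint : (blockPoint m k i : ℝ) = ⌈2 * (k : ℝ) * m⌉₊ + 1 + i := by
    push_cast [blockPoint]; ring
  rw [InBlock, hpoint]
  constructor
  · linarith [Nat.le_ceil (2 * (k : ℝ) * m), (Nat.cast_nonneg i : (0 : ℝ) ≤ i)]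
  · linarith

noncomputable def blockSet (m : ℝ) {S t : ℕ} (f : Fin S → Fin t) : Finset ℕ :=
  univ.image fun k : Fin S => blockPoint m k (f k)

theorem blockSet_injective {m : ℝ} {S t : ℕ} (hm : 0 < m) (ht : (t : ℝ) + 1 ≤ m) :
    Function.Injective (blockSet m : (Fin S → Fin t) → Finset ℕ) := by
  have hin (f : Fin S → Fin t) (k : Fin S) : InBlock m k (blockPoint m k (f k)) :=
    inBlock_blockPoint hm.le ht k (f k).2
  intro f g hfg
  funext k
  have hmem : blockPoint m k (f k) ∈ blockSet m g := hfg ▸ mem_image_of_mem _ (mem_univ k)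
  obtain ⟨k', -, hk'⟩ := mem_image.mp hmem
  obtain rfl : k' = k := Fin.ext <| InBlock.index_eq hm (hin g k') (hk' ▸ hin f k)
  exact Fin.ext (by simpa [blockPoint] using hk'.symm)

theorem blockSet_mem_sigmaColl {n S t : ℕ} (ht : (t : ℝ) + 1 ≤ (n : ℝ) ^ ((1 : ℝ) / 3))
    (hS : (2 * (S : ℝ) - 1) * (n : ℝ) ^ ((1 : ℝ) / 3) ≤ n) (f : Fin S → Fin t) :
    blockSet ((n : ℝ) ^ ((1 : ℝ) / 3)) f ∈ SigmaColl n := by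
  set m := (n : ℝ) ^ ((1 : ℝ) / 3)
  have hm : 0 < m := by linarith [(Nat.cast_nonneg t : (0 : ℝ) ≤ t)]
  have hin (k : Fin S) : InBlock m k (blockPoint m k (f k)) := inBlock_blockPoint hm.le ht k (f k).2
  classical
  rw [SigmaColl, mem_filter, mem_powerset, goodSet_iff]
  refine ⟨fun a ha => ?_, fun a ha => ?_, fun a ha a' ha' k hak ha'k => ?_⟩
  · obtain ⟨k, -, rfl⟩ := mem_image.mp ha
    refine mem_Icc.mpr ⟨by unfold blockPoint; omega, ?_⟩
    have hk : 2 * ((k : ℕ) : ℝ) + 1 ≤ 2 * S - 1 := by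
      have : ((k : ℕ) : ℝ) + 1 ≤ S := by exact_mod_cast k.2
      linarith
    exact_mod_cast (hin k).2.trans ((mul_le_mul_of_nonneg_right hk hm.le).trans hS)
  · obtain ⟨k, -, rfl⟩ := mem_image.mp ha
    exact ⟨k, hin k⟩
  · obtain ⟨k₁, -, rfl⟩ := mem_image.mp ha
    obtain ⟨k₂, -, rfl⟩ := mem_image.mp ha'
    obtain rfl : k₁ = k₂ :=
      Fin.ext ((InBlock.index_eq hm (hin k₁) hak).trans (InBlock.index_eq hm (hin k₂) ha'k).symm)
    rfl

theorem pow_le_card_sigmaColl {n S t : ℕ} (ht : (t : ℝ) + 1 ≤ (n : ℝ) ^ ((1 : ℝ) / 3))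
    (hS : (2 * (S : ℝ) - 1) * (n : ℝ) ^ ((1 : ℝ) / 3) ≤ n) :
    t ^ S ≤ #(SigmaColl n) := by
  have hm : 0 < (n : ℝ) ^ ((1 : ℝ) / 3) := by linarith [(Nat.cast_nonneg t : (0 : ℝ) ≤ t)]
  simpa using card_le_card_of_injOn (s := univ) _ (fun f _ => blockSet_mem_sigmaColl ht hS f)
    (blockSet_injective (S := S) hm ht).injOn

theorem pow_le_pow_of_sq_le_cube {m t : ℝ} {K S : ℕ} (hm : 0 ≤ m) (ht : 1 ≤ t)
    (h : m ^ 2 ≤ t ^ 3) (hKS : 3 * K ≤ 2 * S) : m ^ K ≤ t ^ S := by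
  refine (pow_le_pow_iff_left₀ (by positivity) (by positivity) two_ne_zero).mp ?_
  calc (m ^ K) ^ 2 = (m ^ 2) ^ K := by rw [← pow_mul, ← pow_mul, mul_comm]
    _ ≤ (t ^ 3) ^ K := by gcongr
    _ = t ^ (3 * K) := by rw [← pow_mul]
    _ ≤ t ^ (2 * S) := pow_le_pow_right₀ ht hKS
    _ = (t ^ S) ^ 2 := by rw [← pow_mul, mul_comm]

theorem floor_sub_one_bounds {m : ℝ} (hm : 1 ≤ m) :
    m - 2 ≤ ((⌊m⌋₊ - 1 : ℕ) : ℝ) ∧ ((⌊m⌋₊ - 1 : ℕ) : ℝ) + 1 ≤ m := by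
  have hfloor : 1 ≤ ⌊m⌋₊ := Nat.le_floor (by exact_mod_cast hm)
  rw [Nat.cast_sub hfloor, Nat.cast_one, sub_add_cancel]
  exact ⟨by linarith [Nat.lt_floor_add_one m], Nat.floor_le (by linarith)⟩

theorem cbrt_pow_three {x : ℝ} (hx : 0 ≤ x) : (x ^ ((1 : ℝ) / 3)) ^ 3 = x := by
  rw [one_div]; exact_mod_cast Real.rpow_inv_natCast_pow hx three_ne_zero

theorem rpow_two_thirds {x : ℝ} (hx : 0 ≤ x) : x ^ ((2 : ℝ) / 3) = (x ^ ((1 : ℝ) / 3)) ^ 2 := by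
  rw [← Real.rpow_mul_natCast hx]; norm_num

theorem cbrt_pow_floor_le_card_sigmaColl {n : ℕ} (hn : 125 ≤ n) :
    ((n : ℝ) ^ ((1 : ℝ) / 3)) ^ (⌊(n : ℝ) ^ ((2 : ℝ) / 3) / 3⌋₊) ≤ ((SigmaColl n).card : ℝ) := by
  set m := (n : ℝ) ^ ((1 : ℝ) / 3)
  have hm3 : m ^ 3 = n := cbrt_pow_three n.cast_nonneg
  have hm : 5 ≤ m :=
    le_of_pow_le_pow_left₀ three_ne_zero (by positivity) (by rw [hm3]; norm_num; exact_mod_cast hn)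
  rw [rpow_two_thirds n.cast_nonneg]
  set K := ⌊m ^ 2 / 3⌋₊
  set t := ⌊m⌋₊ - 1
  have hK : 3 * (K : ℝ) ≤ m ^ 2 := by linarith [Nat.floor_le (by positivity : 0 ≤ m ^ 2 / 3)]
  have hS : (2 * (((3 * K + 1) / 2 : ℕ) : ℝ) - 1) * m ≤ n := by
    have : (2 * ((3 * K + 1) / 2 : ℕ) : ℝ) ≤ 3 * K + 1 := by
      exact_mod_cast Nat.mul_div_le (3 * K + 1) 2
    rw [← hm3]
    nlinarith
  obtain ⟨ht₁, ht₂⟩ : m - 2 ≤ t ∧ (t : ℝ) + 1 ≤ m := floor_sub_one_bounds (by linarith)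
  have hmt : m ^ 2 ≤ (t : ℝ) ^ 3 :=
    calc m ^ 2 ≤ (m - 2) ^ 3 := by nlinarith [sq_nonneg (m - 5)]
      _ ≤ _ := by gcongr; linarith
  calc m ^ K ≤ (t : ℝ) ^ ((3 * K + 1) / 2) :=
        pow_le_pow_of_sq_le_cube (by linarith) (by linarith) hmt (by omega)
    _ ≤ _ := by exact_mod_cast pow_le_card_sigmaColl ht₂ hS

theorem sigmaColl_separated {n : ℕ} {A : Finset ℕ} (hA : A ∈ SigmaColl n) {a a' : ℕ} (ha : a ∈ A)
    (ha' : a' ∈ A) (hne : a ≠ a') : (n : ℝ) ^ ((1 : ℝ) / 3) ≤ |(a : ℝ) - (a' : ℝ)| := by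
  classical
  obtain ⟨-, hgood⟩ := mem_filter.mp hA
  obtain ⟨hblock, hunique⟩ := goodSet_iff.mp hgood
  obtain ⟨k, hk⟩ := hblock a ha
  obtain ⟨k', hk'⟩ := hblock a' ha'
  refine InBlock.le_abs_sub (by positivity) hk hk' fun hkk => hne ?_
  exact hunique a ha a' ha' k hk (hkk ▸ hk')

theorem stmt16 : ∃ N : ℕ, ∀ n : ℕ, N ≤ n →
    (((n : ℝ) ^ ((1 : ℝ) / 3)) ^ (⌊(n : ℝ) ^ ((2 : ℝ) / 3) / 3⌋₊) ≤ ((SigmaColl n).card : ℝ)) ∧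
    ∀ A ∈ SigmaColl n, ∀ a ∈ A, ∀ a' ∈ A, a ≠ a' →
      (n : ℝ) ^ ((1 : ℝ) / 3) ≤ |(a : ℝ) - (a' : ℝ)| :=
  ⟨125, fun _ hn => ⟨cbrt_pow_floor_le_card_sigmaColl hn,
    fun _ hA _ ha _ ha' hne => sigmaColl_separated hA ha ha' hne⟩⟩
end
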